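/- Quantitative Poincaré with weight: suppose Ψ ∈ H¹(Ω₁) is continuous with 0 < inf Ψ ≤ sup Ψ < ∞ and satisfies Q₁(φ,φ) ≥ (inf Ψ)² ‖∇(φ/Ψ)‖² for all φ ∈ H¹(Ω₁), where Ω₁ = [0,1]^{d-1} × [0,L]. Then, with K = sup Ψ / inf Ψ, for all φ ∈ H¹(Ω₁): (K²·2/L)‖Γφ‖²_{L²(S)} + (sup Ψ)² · (inf Ψ)^{-2} Q₁(φ,φ) ≥ (1/L²)‖φ‖²_{L²(Ω₁)}. In particular there is c₂ > 0 with (1/L)‖Γφ‖² + Q₁(φ,φ) ≥ (1/(c₂L²))‖φ‖². -/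

import Mathlib

/-!
Put `u = φ / Ψ`. On each vertical fibre `t ↦ u (x', t)` the one-dimensional trace–Poincaré
inequality `∫₀ᴸ u² ≤ 2 L u(0)² + L² ∫₀ᴸ (∂ₜu)²` holds, by `u(t) = u(0) + ∫₀ᵗ ∂ₜu` and
Cauchy–Schwarz. Since `m ≤ Ψ ≤ M`, this turns into
`∫₀ᴸ φ² ≤ 2 L (M/m)² φ(x', 0)² + M² L² ∫₀ᴸ |∇u|²`; integrating over the base `[0,1]^{d-1}` and
using `Q₁ φ ≥ m² ‖∇u‖²` gives the first inequality. The second follows with `c₂ = 2 (M/m)²`,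
because `Q₁ φ ≥ 0`.
-/

open MeasureTheory

/-- Squared Euclidean norm of the full gradient of `φ : ℝ^{d-1} × ℝ → ℝ`. -/
noncomputable def gradSq {n : ℕ} (φ : (Fin n → ℝ) × ℝ → ℝ) (p : (Fin n → ℝ) × ℝ) : ℝ :=
  (∑ i : Fin n, (fderiv ℝ φ p (Pi.single i 1, 0)) ^ 2) + (fderiv ℝ φ p (0, 1)) ^ 2

open Set

theorem sq_intervalIntegral_le {f : ℝ → ℝ} {a b : ℝ} (hab : a ≤ b)
    (hf : IntervalIntegrable f volume a b)
    (hf2 : IntervalIntegrable (fun s => f s ^ 2) volume a b) :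
    (∫ s in a..b, f s) ^ 2 ≤ (b - a) * ∫ s in a..b, f s ^ 2 := by
  rcases hab.eq_or_lt with rfl | hlt
  · simp
  have jensen := (even_two.convexOn_pow (𝕜 := ℝ)).map_set_average_le
    (continuous_pow 2).continuousOn isClosed_univ (μ := volume) (t := Ioc a b) (f := f)
    (by simp [hlt]) (by simp) (by simp) hf.1 hf2.1
  rw [setAverage_eq, setAverage_eq, Real.volume_real_Ioc_of_le hab,
    ← intervalIntegral.integral_of_le hab, ← intervalIntegral.integral_of_le hab, smul_eq_mul,
    smul_eq_mul] at jensen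
  have hba : 0 < b - a := sub_pos.2 hlt
  rw [mul_pow, inv_pow, sq (b - a), mul_inv, mul_assoc,
    mul_le_mul_iff_right₀ (inv_pos.2 hba), inv_mul_le_iff₀ hba] at jensen
  exact jensen

theorem integral_sq_le_of_hasDerivAt {g g' : ℝ → ℝ} {a b : ℝ} (hab : a ≤ b)
    (hg : ∀ t ∈ Icc a b, HasDerivAt g (g' t) t) (hg' : ContinuousOn g' (Icc a b)) :
    ∫ t in a..b, g t ^ 2 ≤ 2 * (b - a) * g a ^ 2 + (b - a) ^ 2 * ∫ t in a..b, g' t ^ 2 := by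
  set D := ∫ t in a..b, g' t ^ 2
  have pointwise : ∀ t ∈ Icc a b, g t ^ 2 ≤ 2 * g a ^ 2 + 2 * (t - a) * D := by
    intro t ht
    have hsub : Icc a t ⊆ Icc a b := Icc_subset_Icc_right ht.2
    have hg't : ContinuousOn g' (Icc a t) := hg'.mono hsub
    have ftc : ∫ s in a..t, g' s = g t - g a :=
      intervalIntegral.integral_eq_sub_of_hasDerivAt
        (fun s hs => hg s (hsub (uIcc_of_le ht.1 ▸ hs))) (hg't.intervalIntegrable_of_Icc ht.1)
    have cs := sq_intervalIntegral_le ht.1 (hg't.intervalIntegrable_of_Icc ht.1)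
      ((hg't.pow 2).intervalIntegrable_of_Icc ht.1)
    have mono : ∫ s in a..t, g' s ^ 2 ≤ D :=
      intervalIntegral.integral_mono_interval le_rfl ht.1 ht.2 (.of_forall fun s => sq_nonneg _)
        ((hg'.pow 2).intervalIntegrable_of_Icc hab)
    rw [ftc] at cs
    nlinarith [sq_nonneg (g t - 2 * g a), mul_le_mul_of_nonneg_left mono (sub_nonneg.2 ht.1)]
  have hgc : ContinuousOn g (Icc a b) := fun t ht => (hg t ht).continuousAt.continuousWithinAt
  have hline : Continuous fun t : ℝ => 2 * (t - a) * D := by fun_prop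
  calc ∫ t in a..b, g t ^ 2
      ≤ ∫ t in a..b, (2 * g a ^ 2 + 2 * (t - a) * D) :=
        intervalIntegral.integral_mono_on hab ((hgc.pow 2).intervalIntegrable_of_Icc hab)
          ((continuous_const.add hline).intervalIntegrable _ _) pointwise
    _ = 2 * (b - a) * g a ^ 2 + (b - a) ^ 2 * D := by
        rw [intervalIntegral.integral_add intervalIntegrable_const (hline.intervalIntegrable _ _),
          intervalIntegral.integral_const, intervalIntegral.integral_mul_const,
          intervalIntegral.integral_const_mul,
          intervalIntegral.integral_comp_sub_right (fun t => t), integral_id]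
        simp only [sub_self, smul_eq_mul]
        ring

theorem integral_sq_le_of_hasDerivAt_div {φ Ψ w : ℝ → ℝ} {a b m M : ℝ} (hab : a ≤ b) (hm : 0 < m)
    (hΨ : ∀ t ∈ Icc a b, m ≤ Ψ t ∧ Ψ t ≤ M) (hφ : ContinuousOn φ (Icc a b))
    (hw : ∀ t ∈ Icc a b, HasDerivAt (fun s => φ s / Ψ s) (w t) t) (hw' : ContinuousOn w (Icc a b)) :
    ∫ t in a..b, φ t ^ 2 ≤
      2 * (b - a) * (M / m) ^ 2 * φ a ^ 2 + M ^ 2 * (b - a) ^ 2 * ∫ t in a..b, w t ^ 2 := by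
  have hquot : ContinuousOn (fun s => φ s / Ψ s) (Icc a b) :=
    fun t ht => (hw t ht).continuousAt.continuousWithinAt
  have hφ_le : ∫ t in a..b, φ t ^ 2 ≤ ∫ t in a..b, M ^ 2 * (φ t / Ψ t) ^ 2 := by
    refine intervalIntegral.integral_mono_on hab ((hφ.pow 2).intervalIntegrable_of_Icc hab)
      (((hquot.pow 2).const_smul (M ^ 2)).intervalIntegrable_of_Icc hab) fun t ht => ?_
    have hΨt : 0 < Ψ t := hm.trans_le (hΨ t ht).1
    rw [div_pow, ← mul_div_assoc, le_div_iff₀ (by positivity), mul_comm (M ^ 2)]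
    gcongr
    exact (hΨ t ht).2
  have hφa : M ^ 2 * (φ a / Ψ a) ^ 2 ≤ (M / m) ^ 2 * φ a ^ 2 := by
    rw [div_pow, div_pow, mul_div_assoc', div_mul_eq_mul_div]
    gcongr
    exact (hΨ a (left_mem_Icc.2 hab)).1
  calc ∫ t in a..b, φ t ^ 2
      ≤ M ^ 2 * ∫ t in a..b, (φ t / Ψ t) ^ 2 := by
        rwa [← intervalIntegral.integral_const_mul]
    _ ≤ M ^ 2 * (2 * (b - a) * (φ a / Ψ a) ^ 2 + (b - a) ^ 2 * ∫ t in a..b, w t ^ 2) := by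
        gcongr
        exact integral_sq_le_of_hasDerivAt hab hw hw'
    _ = 2 * (b - a) * (M ^ 2 * (φ a / Ψ a) ^ 2) + M ^ 2 * (b - a) ^ 2 * ∫ t in a..b, w t ^ 2 := by
        ring
    _ ≤ _ := by linarith [mul_le_mul_of_nonneg_left hφa (by linarith : (0 : ℝ) ≤ 2 * (b - a))]

theorem integrableOn_intervalIntegral_of_continuousOn {X E : Type*} [TopologicalSpace X]
    [T2Space X] [MeasurableSpace X] [OpensMeasurableSpace X] [NormedAddCommGroup E]
    [NormedSpace ℝ E] {μ : Measure X} [IsFiniteMeasureOnCompacts μ] [SFinite μ]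
    {G : X × ℝ → E} {K : Set X} {a b : ℝ} (hab : a ≤ b) (hK : IsCompact K)
    (hG : StronglyMeasurable G) (hGc : ContinuousOn G (K ×ˢ Icc a b)) :
    IntegrableOn (fun x => ∫ t in a..b, G (x, t)) K μ := by
  obtain ⟨C, hC⟩ := (hK.prod isCompact_Icc).exists_bound_of_continuousOn hGc
  refine Measure.integrableOn_of_bounded (M := C * |b - a|) hK.measure_lt_top.ne ?_
    (ae_restrict_of_forall_mem hK.measurableSet fun x hx =>
      intervalIntegral.norm_integral_le_of_norm_le_const fun t ht =>
        hC (x, t) ⟨hx, Ioc_subset_Icc_self (uIoc_of_le hab ▸ ht)⟩)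
  simp_rw [intervalIntegral.integral_of_le hab]
  exact hG.integral_prod_right'.aestronglyMeasurable

section gradSq

variable {n : ℕ} (φ : (Fin n → ℝ) × ℝ → ℝ)

theorem sq_fderiv_snd_le_gradSq (p : (Fin n → ℝ) × ℝ) : fderiv ℝ φ p (0, 1) ^ 2 ≤ gradSq φ p :=
  le_add_of_nonneg_left (Finset.sum_nonneg fun _ _ => sq_nonneg _)

theorem gradSq_nonneg (p : (Fin n → ℝ) × ℝ) : 0 ≤ gradSq φ p := by
  unfold gradSq; positivity

theorem measurable_gradSq : Measurable (gradSq φ) := by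
  unfold gradSq
  fun_prop (disch := exact measurable_fderiv_apply_const ℝ φ _)

variable {φ}

theorem ContDiffOn.continuousOn_gradSq {U : Set ((Fin n → ℝ) × ℝ)} (hU : IsOpen U)
    (hφ : ContDiffOn ℝ 1 φ U) : ContinuousOn (gradSq φ) U := by
  have hfd := hφ.continuousOn_fderiv_of_isOpen hU le_rfl
  unfold gradSq
  fun_prop

end gradSq

theorem DifferentiableAt.hasDerivAt_comp_prodMk {E F : Type*} [NormedAddCommGroup E]
    [NormedSpace ℝ E] [NormedAddCommGroup F] [NormedSpace ℝ F] {f : E × ℝ → F} {x : E} {t : ℝ}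
    (hf : DifferentiableAt ℝ f (x, t)) :
    HasDerivAt (fun s => f (x, s)) (fderiv ℝ f (x, t) (0, 1)) t :=
  hf.hasFDerivAt.comp_hasDerivAt t ((hasDerivAt_const t x).prodMk (hasDerivAt_id t))

section Strip

variable {n : ℕ} {L m M : ℝ} {φ Ψ : (Fin n → ℝ) × ℝ → ℝ}

theorem intervalIntegral_sq_le_trace_add_gradSq (hL : 0 ≤ L) (hm : 0 < m)
    (hφ : ContDiff ℝ 1 φ) (hΨ : ContDiff ℝ 1 Ψ) {x' : Fin n → ℝ}
    (hΨx : ∀ t ∈ Icc 0 L, m ≤ Ψ (x', t) ∧ Ψ (x', t) ≤ M) :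
    ∫ t in (0 : ℝ)..L, φ (x', t) ^ 2 ≤ 2 * L * (M / m) ^ 2 * φ (x', 0) ^ 2
      + M ^ 2 * L ^ 2 * ∫ t in (0 : ℝ)..L, gradSq (fun p => φ p / Ψ p) (x', t) := by
  set U := {p | Ψ p ≠ 0}
  have hU : IsOpen U := isOpen_ne_fun hΨ.continuous continuous_const
  have hu : ContDiffOn ℝ 1 (fun p => φ p / Ψ p) U := hφ.contDiffOn.div hΨ.contDiffOn fun _ h => h
  have hmaps : MapsTo (fun t : ℝ => (x', t)) (Icc 0 L) U :=
    fun t ht => (hm.trans_le (hΨx t ht).1).ne'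
  have hcurve : Continuous fun t : ℝ => (x', t) := by fun_prop
  have hw : ContinuousOn (fun t => fderiv ℝ (fun p => φ p / Ψ p) (x', t) (0, 1)) (Icc 0 L) :=
    ((hu.continuousOn_fderiv_of_isOpen hU le_rfl).comp hcurve.continuousOn hmaps).clm_apply
      continuousOn_const
  have hgrad : ContinuousOn (fun t => gradSq (fun p => φ p / Ψ p) (x', t)) (Icc 0 L) :=
    (hu.continuousOn_gradSq hU).comp hcurve.continuousOn hmaps
  have weighted := integral_sq_le_of_hasDerivAt_div (φ := fun t => φ (x', t))
    (Ψ := fun t => Ψ (x', t)) hL hm hΨx (hφ.continuous.comp hcurve).continuousOn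
    (fun t ht => ((hu.contDiffAt (hU.mem_nhds (hmaps ht))).differentiableAt one_ne_zero
      ).hasDerivAt_comp_prodMk) hw
  have hmono : ∫ t in (0 : ℝ)..L, fderiv ℝ (fun p => φ p / Ψ p) (x', t) (0, 1) ^ 2
      ≤ ∫ t in (0 : ℝ)..L, gradSq (fun p => φ p / Ψ p) (x', t) :=
    intervalIntegral.integral_mono_on hL ((hw.pow 2).intervalIntegrable_of_Icc hL)
      (hgrad.intervalIntegrable_of_Icc hL) fun t _ => sq_fderiv_snd_le_gradSq _ (x', t)
  simp only [sub_zero] at weighted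
  linarith [mul_le_mul_of_nonneg_left hmono (by positivity : 0 ≤ M ^ 2 * L ^ 2)]

theorem integral_sq_le_trace_add_gradSq (hL : 0 ≤ L) (hm : 0 < m)
    (hφ : ContDiff ℝ 1 φ) (hΨ : ContDiff ℝ 1 Ψ)
    (hbounds : ∀ x' ∈ Icc (0 : Fin n → ℝ) 1, ∀ t ∈ Icc 0 L, m ≤ Ψ (x', t) ∧ Ψ (x', t) ≤ M) :
    ∫ x' in Icc (0 : Fin n → ℝ) 1, ∫ t in (0 : ℝ)..L, φ (x', t) ^ 2
      ≤ 2 * L * (M / m) ^ 2 * (∫ x' in Icc (0 : Fin n → ℝ) 1, φ (x', 0) ^ 2)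
        + M ^ 2 * L ^ 2 * ∫ x' in Icc (0 : Fin n → ℝ) 1,
            ∫ t in (0 : ℝ)..L, gradSq (fun p => φ p / Ψ p) (x', t) := by
  have hbox : Icc (0 : Fin n → ℝ) 1 ×ˢ Icc 0 L ⊆ {p | Ψ p ≠ 0} :=
    fun p hp => (hm.trans_le (hbounds p.1 hp.1 p.2 hp.2).1).ne'
  have hφ_int : IntegrableOn (fun x' => ∫ t in (0 : ℝ)..L, φ (x', t) ^ 2) (Icc 0 1) :=
    integrableOn_intervalIntegral_of_continuousOn (G := fun p => φ p ^ 2) hL isCompact_Icc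
      (hφ.continuous.pow 2).stronglyMeasurable (hφ.continuous.pow 2).continuousOn
  have hgrad_int : IntegrableOn
      (fun x' => ∫ t in (0 : ℝ)..L, gradSq (fun p => φ p / Ψ p) (x', t)) (Icc 0 1) :=
    integrableOn_intervalIntegral_of_continuousOn hL isCompact_Icc
      (measurable_gradSq _).stronglyMeasurable
      (((hφ.contDiffOn.div hΨ.contDiffOn fun _ h => h).continuousOn_gradSq
        (isOpen_ne_fun hΨ.continuous continuous_const)).mono hbox)
  have htrace_int : IntegrableOn (fun x' => φ (x', 0) ^ 2) (Icc (0 : Fin n → ℝ) 1) :=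
    (by fun_prop : Continuous fun x' : Fin n → ℝ => φ (x', 0) ^ 2).integrableOn_Icc
  calc ∫ x' in Icc (0 : Fin n → ℝ) 1, ∫ t in (0 : ℝ)..L, φ (x', t) ^ 2
      ≤ ∫ x' in Icc (0 : Fin n → ℝ) 1, (2 * L * (M / m) ^ 2 * φ (x', 0) ^ 2
          + M ^ 2 * L ^ 2 * ∫ t in (0 : ℝ)..L, gradSq (fun p => φ p / Ψ p) (x', t)) :=
        setIntegral_mono_on hφ_int (by exact (htrace_int.const_mul _).add (hgrad_int.const_mul _))
          measurableSet_Icc fun x' hx' =>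
            intervalIntegral_sq_le_trace_add_gradSq hL hm hφ hΨ (hbounds x' hx')
    _ = _ := by
        rw [integral_add (htrace_int.const_mul _) (hgrad_int.const_mul _), integral_const_mul,
          integral_const_mul]

theorem integral_sq_le_trace_add_of_gradSq_le (hL : 0 < L) (hm : 0 < m)
    (hφ : ContDiff ℝ 1 φ) (hΨ : ContDiff ℝ 1 Ψ)
    (hbounds : ∀ x' ∈ Icc (0 : Fin n → ℝ) 1, ∀ t ∈ Icc 0 L, m ≤ Ψ (x', t) ∧ Ψ (x', t) ≤ M)
    {q : ℝ} (hq : m ^ 2 * (∫ x' in Icc (0 : Fin n → ℝ) 1, ∫ t in (0 : ℝ)..L,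
      gradSq (fun p => φ p / Ψ p) (x', t)) ≤ q) :
    (1 / L ^ 2) * (∫ x' in Icc (0 : Fin n → ℝ) 1, ∫ t in (0 : ℝ)..L, φ (x', t) ^ 2)
      ≤ ((M / m) ^ 2 * 2 / L) * (∫ x' in Icc (0 : Fin n → ℝ) 1, φ (x', 0) ^ 2)
        + (M ^ 2 / m ^ 2) * q := by
  set G := ∫ x' in Icc (0 : Fin n → ℝ) 1, ∫ t in (0 : ℝ)..L, gradSq (fun p => φ p / Ψ p) (x', t)
  have hG : M ^ 2 * G ≤ (M ^ 2 / m ^ 2) * q :=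
    calc M ^ 2 * G = (M ^ 2 / m ^ 2) * (m ^ 2 * G) := by field_simp
      _ ≤ (M ^ 2 / m ^ 2) * q := by gcongr
  calc (1 / L ^ 2) * (∫ x' in Icc (0 : Fin n → ℝ) 1, ∫ t in (0 : ℝ)..L, φ (x', t) ^ 2)
      ≤ (1 / L ^ 2) * (2 * L * (M / m) ^ 2 * (∫ x' in Icc (0 : Fin n → ℝ) 1, φ (x', 0) ^ 2)
          + M ^ 2 * L ^ 2 * G) := by
        gcongr
        exact integral_sq_le_trace_add_gradSq hL.le hm hφ hΨ hbounds
    _ = ((M / m) ^ 2 * 2 / L) * (∫ x' in Icc (0 : Fin n → ℝ) 1, φ (x', 0) ^ 2) + M ^ 2 * G := by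
        field_simp
    _ ≤ _ := by gcongr

end Strip

/-- Quantitative Poincaré inequality with a ground state weight on the strip
`Ω₁ = [0,1]^{d-1} × [0,L]`: if `0 < m ≤ Ψ ≤ M` on `Ω₁` and the form `Q₁` dominates
`m²‖∇(φ/Ψ)‖²`, then with `K = M/m`,
`(K²·2/L)‖Γφ‖² + (M²/m²)Q₁(φ,φ) ≥ (1/L²)‖φ‖²`, and in particular there is `c₂ > 0`
with `(1/L)‖Γφ‖² + Q₁(φ,φ) ≥ (1/(c₂L²))‖φ‖²`. -/
theorem weighted_trace_poincare {n : ℕ} (L : ℝ) (hL : 0 < L)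
    (Ψ : (Fin n → ℝ) × ℝ → ℝ) (Q₁ : ((Fin n → ℝ) × ℝ → ℝ) → ℝ)
    (m M : ℝ) (hm : 0 < m) (hΨ : ContDiff ℝ 1 Ψ)
    (hbounds : ∀ x' ∈ Set.Icc (0 : Fin n → ℝ) 1, ∀ t ∈ Set.Icc (0 : ℝ) L,
      m ≤ Ψ (x', t) ∧ Ψ (x', t) ≤ M)
    (hQ : ∀ φ : (Fin n → ℝ) × ℝ → ℝ, ContDiff ℝ 1 φ →
      m ^ 2 * (∫ x' in Set.Icc (0 : Fin n → ℝ) 1, ∫ t in (0 : ℝ)..L,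
          gradSq (fun p => φ p / Ψ p) (x', t)) ≤ Q₁ φ) :
    (∀ φ : (Fin n → ℝ) × ℝ → ℝ, ContDiff ℝ 1 φ →
      (1 / L ^ 2) * (∫ x' in Set.Icc (0 : Fin n → ℝ) 1, ∫ t in (0 : ℝ)..L, (φ (x', t)) ^ 2)
        ≤ ((M / m) ^ 2 * 2 / L) * (∫ x' in Set.Icc (0 : Fin n → ℝ) 1, (φ (x', 0)) ^ 2)
          + (M ^ 2 / m ^ 2) * Q₁ φ) ∧
    ∃ c₂ > (0 : ℝ), ∀ φ : (Fin n → ℝ) × ℝ → ℝ, ContDiff ℝ 1 φ →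
      (1 / (c₂ * L ^ 2)) *
          (∫ x' in Set.Icc (0 : Fin n → ℝ) 1, ∫ t in (0 : ℝ)..L, (φ (x', t)) ^ 2)
        ≤ (1 / L) * (∫ x' in Set.Icc (0 : Fin n → ℝ) 1, (φ (x', 0)) ^ 2) + Q₁ φ := by
  obtain ⟨hmΨ, hΨM⟩ := hbounds 0 ⟨le_rfl, zero_le_one⟩ 0 ⟨le_rfl, hL.le⟩
  have hM : 0 < M := by linarith
  have poincare φ (hφ : ContDiff ℝ 1 φ) :=
    integral_sq_le_trace_add_of_gradSq_le hL hm hφ hΨ hbounds (hQ φ hφ)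
  refine ⟨poincare, 2 * (M / m) ^ 2, by positivity, fun φ hφ => ?_⟩
  have hQ_nonneg : 0 ≤ Q₁ φ :=
    (mul_nonneg (sq_nonneg m) (setIntegral_nonneg measurableSet_Icc fun x' _ =>
      intervalIntegral.integral_nonneg hL.le fun t _ => gradSq_nonneg _ _)).trans (hQ φ hφ)
  have h := poincare φ hφ
  rw [← div_pow] at h
  calc 1 / (2 * (M / m) ^ 2 * L ^ 2)
        * (∫ x' in Icc (0 : Fin n → ℝ) 1, ∫ t in (0 : ℝ)..L, φ (x', t) ^ 2)
      = 1 / (2 * (M / m) ^ 2)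
        * ((1 / L ^ 2) * ∫ x' in Icc (0 : Fin n → ℝ) 1, ∫ t in (0 : ℝ)..L, φ (x', t) ^ 2) := by
        ring
    _ ≤ 1 / (2 * (M / m) ^ 2) * (((M / m) ^ 2 * 2 / L)
          * (∫ x' in Icc (0 : Fin n → ℝ) 1, φ (x', 0) ^ 2) + (M / m) ^ 2 * Q₁ φ) := by
        gcongr
    _ = 1 / L * (∫ x' in Icc (0 : Fin n → ℝ) 1, φ (x', 0) ^ 2) + Q₁ φ / 2 := by
        field_simp
    _ ≤ _ := by linarith
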